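/- A globally hyperbolic poset X has a countable basis (as a continuous poset) if and only if its interval domain IX is ω-continuous. -/
import Mathlib


/-- `x` is way below `y`. -/
def wayBelow {P : Type*} [Preorder P] (x y : P) : Prop :=
  ∀ S : Set P, S.Nonempty → DirectedOn (· ≤ ·) S → ∀ s : P, IsLUB S s → y ≤ s →
    ∃ z ∈ S, x ≤ z

/-- A poset is a dcpo if every nonempty directed subset has a supremum. -/
def IsDcpo (P : Type*) [Preorder P] : Prop :=
  ∀ S : Set P, S.Nonempty → DirectedOn (· ≤ ·) S → ∃ s : P, IsLUB S s

/-- `B` is a (domain-theoretic) basis for `P`. -/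
def IsDomainBasis {P : Type*} [Preorder P] (B : Set P) : Prop :=
  ∀ x : P, ∃ S : Set P, S ⊆ B ∧ S.Nonempty ∧ DirectedOn (· ≤ ·) S ∧
    (∀ a ∈ S, wayBelow a x) ∧ IsLUB S x

/-- A poset is continuous if it has a basis (equivalently, the whole poset is a basis). -/
def IsContinuousPoset (P : Type*) [Preorder P] : Prop :=
  IsDomainBasis (Set.univ : Set P)

/-- The Scott topology on a poset. -/
def scottTop (P : Type*) [Preorder P] : TopologicalSpace P where
  IsOpen U := (∀ x ∈ U, ∀ y, x ≤ y → y ∈ U) ∧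
    ∀ S : Set P, S.Nonempty → DirectedOn (· ≤ ·) S → ∀ s : P, IsLUB S s → s ∈ U →
      (S ∩ U).Nonempty
  isOpen_univ := ⟨fun _ _ _ _ => trivial,
    fun S hS _ _ _ _ => hS.imp fun x hx => ⟨hx, trivial⟩⟩
  isOpen_inter := by
    rintro U V ⟨hUup, hUin⟩ ⟨hVup, hVin⟩
    refine ⟨fun x hx y hxy => ⟨hUup x hx.1 y hxy, hVup x hx.2 y hxy⟩, ?_⟩
    rintro S hS hdir s hs ⟨hsU, hsV⟩
    obtain ⟨a, haS, haU⟩ := hUin S hS hdir s hs hsU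
    obtain ⟨b, hbS, hbV⟩ := hVin S hS hdir s hs hsV
    obtain ⟨c, hcS, hac, hbc⟩ := hdir a haS b hbS
    exact ⟨c, hcS, hUup a haU c hac, hVup b hbV c hbc⟩
  isOpen_sUnion := by
    intro C hC
    refine ⟨fun x hx y hxy => ?_, ?_⟩
    · obtain ⟨t, htC, hxt⟩ := hx
      exact ⟨t, htC, (hC t htC).1 x hxt y hxy⟩
    · rintro S hS hdir s hs ⟨t, htC, hst⟩
      obtain ⟨a, haS, hat⟩ := (hC t htC).2 S hS hdir s hs hst
      exact ⟨a, haS, t, htC, hat⟩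

/-- A continuous poset is bicontinuous if the way-below relation admits the dual
characterization via filtered infima and each `↟x` is filtered with infimum `x`. -/
def IsBicontinuous (P : Type*) [Preorder P] : Prop :=
  IsContinuousPoset P ∧
  (∀ x y : P, wayBelow x y ↔
    ∀ S : Set P, S.Nonempty → DirectedOn (· ≥ ·) S → ∀ i : P, IsGLB S i → i ≤ x →
      ∃ s ∈ S, s ≤ y) ∧
  (∀ x : P, {a | wayBelow x a}.Nonempty ∧ DirectedOn (· ≥ ·) {a | wayBelow x a} ∧
    IsGLB {a | wayBelow x a} x)

/-- The interval topology on a bicontinuous poset, with basic open sets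
`(a,b) = {x | a ≪ x ≪ b}`. -/
def intervalTop (P : Type*) [Preorder P] : TopologicalSpace P :=
  .generateFrom {s | ∃ a b : P, s = {x | wayBelow a x ∧ wayBelow x b}}

/-- A globally hyperbolic poset: bicontinuous, with all closed intervals compact
in the interval topology. -/
def IsGloballyHyperbolic (P : Type*) [PartialOrder P] : Prop :=
  IsBicontinuous P ∧ ∀ a b : P, a ≤ b → @IsCompact P (intervalTop P) (Set.Icc a b)

variable (X : Type*) [PartialOrder X]

/-- The interval domain of a poset: closed order intervals `[a,b]`. -/
structure IntDom where
  carrier : Set X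
  isIcc : ∃ a b : X, a ≤ b ∧ carrier = Set.Icc a b

/-- Reverse inclusion order on the interval domain. -/
instance : PartialOrder (IntDom X) where
  le I J := J.carrier ⊆ I.carrier
  le_refl I := subset_rfl
  le_trans I J K h1 h2 := Set.Subset.trans h2 h1
  le_antisymm I J h1 h2 := by
    cases I; cases J
    simp only [IntDom.mk.injEq]
    exact subset_antisymm h2 h1


/-! ### Auxiliary lemmas -/

section AuxGeneral

variable {P : Type*} [Preorder P]

lemma wayBelow_le {a b : P} (h : wayBelow a b) : a ≤ b := by
  obtain ⟨z, hz, haz⟩ := h {b} ⟨b, rfl⟩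
    (fun u hu v hv => ⟨b, rfl, le_of_eq hu, le_of_eq hv⟩) b isLUB_singleton le_rfl
  rw [Set.mem_singleton_iff] at hz
  exact hz ▸ haz

lemma wayBelow_mono {a' a b b' : P} (h1 : a' ≤ a) (h : wayBelow a b) (h2 : b ≤ b') :
    wayBelow a' b' := by
  intro S hS hd s hs hbs
  obtain ⟨z, hzS, haz⟩ := h S hS hd s hs (h2.trans hbs)
  exact ⟨z, hzS, h1.trans haz⟩

lemma directedOn_finset_le {S : Set P} (hdir : DirectedOn (· ≤ ·) S)
    {K0 : P} (hK0 : K0 ∈ S) (u : Finset P) (hu : ↑u ⊆ S) :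
    ∃ K' ∈ S, K0 ≤ K' ∧ ∀ i ∈ u, i ≤ K' := by
  classical
  induction u using Finset.induction_on with
  | empty => exact ⟨K0, hK0, le_rfl, fun i hi => absurd hi (Finset.notMem_empty i)⟩
  | @insert i u hni ih =>
    obtain ⟨K', hK'S, h0, hall⟩ := ih (fun j hj => hu (Finset.mem_insert_of_mem hj))
    obtain ⟨K'', hK''S, h1, h2⟩ := hdir K' hK'S i (hu (Finset.mem_insert_self i u))
    refine ⟨K'', hK''S, h0.trans h1, fun j hj => ?_⟩
    rcases Finset.mem_insert.1 hj with rfl | hj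
    · exact h2
    · exact (hall j hj).trans h1

/-- Interpolation with basis elements in a poset with a domain basis. -/
lemma wayBelow_interpolate {B : Set P} (hB : IsDomainBasis B) {x y : P}
    (hxy : wayBelow x y) : ∃ z ∈ B, wayBelow x z ∧ wayBelow z y := by
  choose F hFB hFne hFdir hFwb hFlub using hB
  set D : Set P := {a | ∃ w ∈ F y, a ∈ F w} with hD
  have hDne : D.Nonempty := by
    obtain ⟨w, hw⟩ := hFne y
    obtain ⟨a, ha⟩ := hFne w
    exact ⟨a, w, hw, ha⟩
  have hDdir : DirectedOn (· ≤ ·) D := by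
    rintro a1 ⟨w1, hw1, ha1⟩ a2 ⟨w2, hw2, ha2⟩
    obtain ⟨w, hw, h1, h2⟩ := hFdir y w1 hw1 w2 hw2
    have ha1w : wayBelow a1 w := wayBelow_mono le_rfl (hFwb w1 a1 ha1) h1
    have ha2w : wayBelow a2 w := wayBelow_mono le_rfl (hFwb w2 a2 ha2) h2
    obtain ⟨c1, hc1, hac1⟩ := ha1w (F w) (hFne w) (hFdir w) w (hFlub w) le_rfl
    obtain ⟨c2, hc2, hac2⟩ := ha2w (F w) (hFne w) (hFdir w) w (hFlub w) le_rfl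
    obtain ⟨c, hc, h1', h2'⟩ := hFdir w c1 hc1 c2 hc2
    exact ⟨c, ⟨w, hw, hc⟩, hac1.trans h1', hac2.trans h2'⟩
  have hDlub : IsLUB D y := by
    constructor
    · rintro a ⟨w, hw, ha⟩
      exact (wayBelow_le (hFwb w a ha)).trans (wayBelow_le (hFwb y w hw))
    · intro u hu
      apply (hFlub y).2
      intro w hw
      apply (hFlub w).2
      intro a ha
      exact hu ⟨w, hw, ha⟩
  obtain ⟨a, ⟨w, hw, haw⟩, hxa⟩ := hxy D hDne hDdir y hDlub le_rfl
  exact ⟨w, hFB y hw, wayBelow_mono hxa (hFwb w a haw) le_rfl, hFwb y w hw⟩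

end AuxGeneral

/-- Closed intervals given by endpoints. -/
def IntDom.mk' (a b : X) (h : a ≤ b) : IntDom X := ⟨Set.Icc a b, a, b, h, rfl⟩

lemma IntDom.le_iff {I J : IntDom X} : I ≤ J ↔ J.carrier ⊆ I.carrier := Iff.rfl

lemma IntDom.ext' {I J : IntDom X} (h : I.carrier = J.carrier) : I = J := by
  cases I with
  | mk c1 p1 =>
    cases J with
    | mk c2 p2 =>
      dsimp only at h
      subst h
      rfl

/-- In the interval domain, the carrier of a least upper bound is the intersection. -/
lemma IntDom.lub_carrier {S : Set (IntDom X)} {J : IntDom X} (h : IsLUB S J) :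
    J.carrier = ⋂ K ∈ S, K.carrier := by
  apply subset_antisymm
  · exact Set.subset_iInter₂ fun K hK => h.1 hK
  · intro x hx
    have hub : IntDom.mk' X x x le_rfl ∈ upperBounds S := by
      intro K hK
      rw [IntDom.le_iff]
      intro y hy
      have : y = x := le_antisymm hy.2 hy.1
      subst this
      exact Set.mem_iInter₂.1 hx K hK
    exact (h.2 hub) (Set.mem_Icc.2 ⟨le_rfl, le_rfl⟩)

/-- Closed intervals are closed in the interval topology (uses bicontinuity). -/
lemma icc_isClosed (hX : IsGloballyHyperbolic X) (p q : X) :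
    @IsClosed X (intervalTop X) (Set.Icc p q) := by
  obtain ⟨⟨hcont, _hdual, hfilt⟩, _hcmp⟩ := hX
  letI := intervalTop X
  rw [← isOpen_compl_iff, isOpen_iff_forall_mem_open]
  intro y hy
  rw [Set.mem_compl_iff, Set.mem_Icc] at hy
  obtain ⟨Sy, _, hSyne, _hSydir, hSywb, hSylub⟩ := hcont y
  obtain ⟨e, heSy⟩ := hSyne
  obtain ⟨hne, _hdirge, hglb⟩ := hfilt y
  by_cases hpy : p ≤ y
  · have hyq : ¬ y ≤ q := fun h => hy ⟨hpy, h⟩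
    have : ∃ e' ∈ Sy, ¬ e' ≤ q := by
      by_contra h
      push_neg at h
      exact hyq (hSylub.2 h)
    obtain ⟨e', he'Sy, he'q⟩ := this
    obtain ⟨f, hf⟩ := hne
    refine ⟨{z | wayBelow e' z ∧ wayBelow z f}, ?_, ?_, ?_⟩
    · intro z hz hzIcc
      exact he'q (le_trans (wayBelow_le hz.1) hzIcc.2)
    · exact TopologicalSpace.GenerateOpen.basic _ ⟨e', f, rfl⟩
    · exact ⟨hSywb e' he'Sy, hf⟩
  · have : ∃ f, wayBelow y f ∧ ¬ p ≤ f := by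
      by_contra h
      push_neg at h
      exact hpy (hglb.2 fun a ha => h a ha)
    obtain ⟨f, hyf, hpf⟩ := this
    refine ⟨{z | wayBelow e z ∧ wayBelow z f}, ?_, ?_, ⟨hSywb e heSy, hyf⟩⟩
    · intro z hz hzIcc
      exact hpf (le_trans hzIcc.1 (wayBelow_le hz.2))
    · exact TopologicalSpace.GenerateOpen.basic _ ⟨e, f, rfl⟩

/-- Key lemma: if `a ≪ c` and `d ≪ b` then `[a,b]` is way below `[c,d]` in the
interval domain.  Uses compactness of closed intervals. -/
lemma key_wayBelow (hX : IsGloballyHyperbolic X) {a b c d : X} (hab : a ≤ b)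
    {I : IntDom X} (hIcar : I.carrier = Set.Icc c d)
    (hac : wayBelow a c) (hdb : wayBelow d b) :
    wayBelow (IntDom.mk' X a b hab) I := by
  classical
  intro S hSne hSdir J hJ hIJ
  letI := intervalTop X
  set C : Set X := {y | wayBelow a y ∧ wayBelow y b} with hC
  have hCopen : IsOpen C := TopologicalSpace.GenerateOpen.basic _ ⟨a, b, rfl⟩
  obtain ⟨K0, hK0⟩ := hSne
  obtain ⟨p0, q0, hpq0, hcar0⟩ := K0.isIcc
  have hcomp : IsCompact K0.carrier := hcar0 ▸ hX.2 p0 q0 hpq0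
  have hZc : ∀ K : S, IsClosed ((K : IntDom X).carrier ∩ Cᶜ) := by
    intro K
    obtain ⟨p, q, hpq, hcar⟩ := (K : IntDom X).isIcc
    exact (hcar ▸ icc_isClosed X hX p q).inter hCopen.isClosed_compl
  have hempty : K0.carrier ∩ ⋂ K : S, ((K : IntDom X).carrier ∩ Cᶜ) = ∅ := by
    apply Set.eq_empty_iff_forall_notMem.2
    rintro x ⟨_hx0, hx⟩
    rw [Set.mem_iInter] at hx
    have hxJ : x ∈ J.carrier := by
      rw [IntDom.lub_carrier X hJ]
      exact Set.mem_iInter₂.2 fun K hK => (hx ⟨K, hK⟩).1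
    have hxcd : x ∈ Set.Icc c d := hIcar ▸ hIJ hxJ
    exact (hx ⟨K0, hK0⟩).2 ⟨wayBelow_mono le_rfl hac hxcd.1, wayBelow_mono hxcd.2 hdb le_rfl⟩
  obtain ⟨u, hu⟩ := hcomp.elim_finite_subfamily_closed _ hZc hempty
  obtain ⟨K', hK'S, hK0K', hall⟩ :=
    directedOn_finset_le hSdir hK0 (u.image Subtype.val)
      (by
        intro j hj
        obtain ⟨i, _, rfl⟩ := Finset.mem_image.1 hj
        exact i.2)
  have hsub : K'.carrier ⊆ C := by
    intro x hx
    by_contra hxC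
    have : x ∈ K0.carrier ∩ ⋂ i ∈ u, ((i : IntDom X).carrier ∩ Cᶜ) := by
      refine ⟨hK0K' hx, Set.mem_iInter₂.2 fun i hi => ⟨?_, hxC⟩⟩
      exact hall i (Finset.mem_image_of_mem _ hi) hx
    rw [hu] at this
    exact this
  obtain ⟨p', q', hpq', hcar'⟩ := K'.isIcc
  refine ⟨K', hK'S, ?_⟩
  rw [IntDom.le_iff]
  intro z hz
  have hzC : z ∈ C := hsub hz
  rw [hcar'] at hz
  have hp'C : p' ∈ C := hsub (by rw [hcar']; exact Set.left_mem_Icc.2 hpq')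
  have hq'C : q' ∈ C := hsub (by rw [hcar']; exact Set.right_mem_Icc.2 hpq')
  exact Set.mem_Icc.2 ⟨(wayBelow_le hp'C.1).trans hz.1, hz.2.trans (wayBelow_le hq'C.2)⟩

/-- A globally hyperbolic poset has a countable basis iff its interval domain is
ω-continuous (i.e. has a countable basis). -/
theorem countableBasis_iff_intDom_omega_continuous (hX : IsGloballyHyperbolic X) :
    (∃ B : Set X, B.Countable ∧ IsDomainBasis B) ↔
    (∃ B : Set (IntDom X), B.Countable ∧ IsDomainBasis B) := by
  classical
  constructor
  · -- forward: countable basis of X gives countable basis of IX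
    rintro ⟨B, hBc, hB⟩
    set g : X × X → IntDom X := fun p =>
      if h : p.1 ≤ p.2 then IntDom.mk' X p.1 p.2 h else IntDom.mk' X p.1 p.1 le_rfl with hg
    refine ⟨g '' (B ×ˢ B), (hBc.prod hBc).image g, ?_⟩
    intro I
    obtain ⟨c, d, hcd, hIcar⟩ := I.isIcc
    choose F hFB hFne hFdir hFwb hFlub using hB
    obtain ⟨hup_ne, hup_dir, hup_glb⟩ := hX.1.2.2 d
    -- from any b' with d ≪ b', get a basis element between
    have hinterp : ∀ {b' : X}, wayBelow d b' → ∃ bb ∈ B, wayBelow d bb ∧ bb ≤ b' := by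
      intro b' h
      obtain ⟨z, hzB, hdz, hzb'⟩ := wayBelow_interpolate
        (fun x => ⟨F x, hFB x, hFne x, hFdir x, hFwb x, hFlub x⟩) h
      exact ⟨z, hzB, hdz, wayBelow_le hzb'⟩
    obtain ⟨f0, hf0⟩ := hup_ne
    obtain ⟨b0, hb0B, hdb0, _⟩ := hinterp hf0
    obtain ⟨a0, ha0Fc⟩ := hFne c
    have ha0B : a0 ∈ B := hFB c ha0Fc
    have ha0c : wayBelow a0 c := hFwb c a0 ha0Fc
    set T : Set (IntDom X) := {K | ∃ a ∈ B, ∃ b ∈ B, wayBelow a c ∧ wayBelow d b ∧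
      ∃ hab : a ≤ b, K = IntDom.mk' X a b hab} with hT
    have hle : ∀ {a b : X}, wayBelow a c → wayBelow d b → a ≤ b := fun hac hdb =>
      ((wayBelow_le hac).trans hcd).trans (wayBelow_le hdb)
    have hmemT : ∀ {a b : X}, a ∈ B → b ∈ B → wayBelow a c → wayBelow d b →
        ∀ h : a ≤ b, IntDom.mk' X a b h ∈ T := by
      intro a b haB hbB hac hdb h
      exact ⟨a, haB, b, hbB, hac, hdb, h, rfl⟩
    refine ⟨T, ?_, ?_, ?_, ?_, ?_⟩
    · -- T ⊆ g '' (B ×ˢ B)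
      rintro K ⟨a, haB, b, hbB, hac, hdb, hab, rfl⟩
      refine ⟨(a, b), Set.mk_mem_prod haB hbB, ?_⟩
      rw [hg]
      exact dif_pos hab
    · exact ⟨_, hmemT ha0B hb0B ha0c hdb0 (hle ha0c hdb0)⟩
    · -- directedness of T
      rintro K1 ⟨a1, ha1B, b1, hb1B, ha1c, hdb1, hab1, rfl⟩
        K2 ⟨a2, ha2B, b2, hb2B, ha2c, hdb2, hab2, rfl⟩
      obtain ⟨z1, hz1, haz1⟩ := ha1c (F c) (hFne c) (hFdir c) c (hFlub c) le_rfl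
      obtain ⟨z2, hz2, haz2⟩ := ha2c (F c) (hFne c) (hFdir c) c (hFlub c) le_rfl
      obtain ⟨z, hz, hz1z, hz2z⟩ := hFdir c z1 hz1 z2 hz2
      obtain ⟨b', hb', hb'1, hb'2⟩ := hup_dir b1 hdb1 b2 hdb2
      obtain ⟨bb, hbbB, hdbb, hbbb'⟩ := hinterp hb'
      have hzc : wayBelow z c := hFwb c z hz
      refine ⟨_, hmemT (hFB c hz) hbbB hzc hdbb (hle hzc hdbb), ?_, ?_⟩
      · exact Set.Icc_subset_Icc (haz1.trans hz1z) (hbbb'.trans hb'1)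
      · exact Set.Icc_subset_Icc (haz2.trans hz2z) (hbbb'.trans hb'2)
    · -- each element of T is way below I
      rintro K ⟨a, _, b, _, hac, hdb, hab, rfl⟩
      exact key_wayBelow X hX hab hIcar hac hdb
    · -- IsLUB T I
      constructor
      · rintro K ⟨a, _, b, _, hac, hdb, hab, rfl⟩
        rw [IntDom.le_iff, hIcar]
        exact Set.Icc_subset_Icc (wayBelow_le hac) (wayBelow_le hdb)
      · intro J' hJ'
        rw [IntDom.le_iff, hIcar]
        intro x hx
        have hcx : c ≤ x := by
          apply (hFlub c).2
          intro a haFc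
          have hac : wayBelow a c := hFwb c a haFc
          have := hJ' (hmemT (hFB c haFc) hb0B hac hdb0 (hle hac hdb0))
          exact (this hx).1
        have hxd : x ≤ d := by
          apply hup_glb.2
          intro b' hb'
          obtain ⟨bb, hbbB, hdbb, hbbb'⟩ := hinterp hb'
          have := hJ' (hmemT ha0B hbbB ha0c hdbb (hle ha0c hdbb))
          exact le_trans (this hx).2 hbbb'
        exact ⟨hcx, hxd⟩
  · -- backward: countable basis of IX gives countable basis of X
    rintro ⟨C, hCc, hC⟩
    set leftEnd : IntDom X → X := fun K => K.isIcc.choose with hleft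
    refine ⟨leftEnd '' C, hCc.image _, ?_⟩
    intro x
    have hcont := hX.1.1
    have hfilt := hX.1.2.2
    choose F _hFuniv hFne hFdir hFwb hFlub using hcont
    set I0 : IntDom X := IntDom.mk' X x x le_rfl with hI0
    obtain ⟨T, hTC, hTne, hTdir, hTwb, hTlub⟩ := hC I0
    -- the family of intervals [a', x] for a' in F x has supremum [x,x]
    set g' : X → IntDom X := fun a' =>
      if h : a' ≤ x then IntDom.mk' X a' x h else IntDom.mk' X x x le_rfl with hg'
    have hg'eq : ∀ {a' : X} (h : a' ∈ F x), g' a' = IntDom.mk' X a' x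
        (wayBelow_le (hFwb x a' h)) := by
      intro a' ha'
      rw [hg']
      exact dif_pos _
    set A : Set (IntDom X) := g' '' (F x) with hA
    have hAne : A.Nonempty := (hFne x).image g'
    have hAdir : DirectedOn (· ≤ ·) A := by
      rintro _ ⟨a1, ha1, rfl⟩ _ ⟨a2, ha2, rfl⟩
      obtain ⟨a3, ha3, h13, h23⟩ := hFdir x a1 ha1 a2 ha2
      refine ⟨g' a3, ⟨a3, ha3, rfl⟩, ?_, ?_⟩
      · rw [hg'eq ha1, hg'eq ha3]
        exact Set.Icc_subset_Icc h13 le_rfl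
      · rw [hg'eq ha2, hg'eq ha3]
        exact Set.Icc_subset_Icc h23 le_rfl
    have hAlub : IsLUB A I0 := by
      constructor
      · rintro _ ⟨a', ha', rfl⟩
        rw [hg'eq ha', IntDom.le_iff]
        exact Set.Icc_subset_Icc (wayBelow_le (hFwb x a' ha')) le_rfl
      · intro J' hJ'
        rw [IntDom.le_iff]
        intro y hy
        have h1 : ∀ a' ∈ F x, y ∈ Set.Icc a' x := by
          intro a' ha'
          have := hJ' ⟨a', ha', rfl⟩
          rw [hg'eq ha', IntDom.le_iff] at this
          exact this hy
        obtain ⟨a0, ha0⟩ := hFne x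
        have hyx : y ≤ x := (h1 a0 ha0).2
        have hxy : x ≤ y := (hFlub x).2 fun a' ha' => (h1 a' ha').1
        have : y = x := le_antisymm hyx hxy
        subst this
        exact Set.mem_Icc.2 ⟨le_rfl, le_rfl⟩
    -- key claim: every approximant of x is dominated by a basis left endpoint ≪ x
    have claim : ∀ a : X, wayBelow a x → ∃ p ∈ leftEnd '' C, a ≤ p ∧ wayBelow p x := by
      intro a hax
      obtain ⟨f, hxf⟩ := (hfilt x).1
      have haf : a ≤ f := (wayBelow_le hax).trans (wayBelow_le hxf)
      have hL : wayBelow (IntDom.mk' X a f haf) I0 :=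
        key_wayBelow X hX haf (by rw [hI0]; rfl) hax hxf
      obtain ⟨K, hKT, hLK⟩ := hL T hTne hTdir I0 hTlub le_rfl
      rw [IntDom.le_iff] at hLK
      obtain ⟨q, hpq, hcar⟩ := K.isIcc.choose_spec
      have hpK : leftEnd K ∈ K.carrier := by
        rw [hcar]
        exact Set.left_mem_Icc.2 hpq
      have hap : a ≤ leftEnd K := (hLK hpK).1
      -- leftEnd K ≪ x via the family A
      obtain ⟨_, ⟨a', ha', rfl⟩, hKg⟩ := hTwb K hKT A hAne hAdir I0 hAlub le_rfl
      rw [hg'eq ha', IntDom.le_iff, hcar] at hKg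
      have ha'x : a' ∈ Set.Icc a' x := Set.left_mem_Icc.2 (wayBelow_le (hFwb x a' ha'))
      have hpa' : leftEnd K ≤ a' := (hKg ha'x).1
      exact ⟨leftEnd K, ⟨K, hTC hKT, rfl⟩, hap,
        wayBelow_mono hpa' (hFwb x a' ha') le_rfl⟩
    set D : Set X := {p | p ∈ leftEnd '' C ∧ wayBelow p x} with hD
    obtain ⟨a0, ha0⟩ := hFne x
    obtain ⟨p0, hp0img, _, hp0x⟩ := claim a0 (hFwb x a0 ha0)
    refine ⟨D, fun p hp => hp.1, ⟨p0, hp0img, hp0x⟩, ?_, fun p hp => hp.2, ?_, ?_⟩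
    · -- directedness of D
      rintro p1 ⟨_, hp1x⟩ p2 ⟨_, hp2x⟩
      obtain ⟨z1, hz1, h1⟩ := hp1x (F x) (hFne x) (hFdir x) x (hFlub x) le_rfl
      obtain ⟨z2, hz2, h2⟩ := hp2x (F x) (hFne x) (hFdir x) x (hFlub x) le_rfl
      obtain ⟨z, hz, hz1z, hz2z⟩ := hFdir x z1 hz1 z2 hz2
      obtain ⟨p, hpimg, hzp, hpx⟩ := claim z (hFwb x z hz)
      exact ⟨p, ⟨hpimg, hpx⟩, (h1.trans hz1z).trans hzp, (h2.trans hz2z).trans hzp⟩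
    · -- x is an upper bound of D
      rintro p ⟨_, hpx⟩
      exact wayBelow_le hpx
    · -- x is the least upper bound of D
      intro w hw
      apply (hFlub x).2
      intro a haFx
      obtain ⟨p, hpimg, hap, hpx⟩ := claim a (hFwb x a haFx)
      exact hap.trans (hw ⟨hpimg, hpx⟩)
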